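/- arXiv:2004.13528 — 4 statements merged into one kernel-verified Lean document; each statement's English description precedes it below -/
import Mathlib

section
/- For every real q ≠ 1, every d ≥ 1, and all positive reals x₁, ..., x_d: ln_q(x₁·x₂·...·x_d) = Σ_{k=1}^{d} (1−q)^{k−1} · Σ_{S ⊆ {1,...,d}, |S| = k} ∏_{i∈S} ln_q x_i. In particular, applied to the expanding eigenvalue moduli of a hyperbolic automorphism, the q-logarithm of the volume expansion rate ln_q(∏_{β=1}^{d}|λ_β|) expands into the sum of terms of all orders in the individual sub-entropies ln_q|λ_i|, with coefficient (1−q)^{k−1} in front of the order-k terms, identical in structure with the linear combination h(T) + r₂(T) + ... + r_d(T) of extended entropies. -/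
noncomputable def lnq (q x : ℝ) : ℝ := (x ^ (1 - q) - 1) / (1 - q)

/-! Since `x ^ (1 - q) = 1 + (1 - q) * ln_q x`, the power `(∏ xᵢ) ^ (1 - q)` equals
`∏ (1 + (1 - q) * ln_q xᵢ)`. Expanding this product over subsets and grouping the subsets by size
gives `∑ₖ (1 - q) ^ k * eₖ`, where `eₖ` is the `k`-th elementary symmetric sum of the `ln_q xᵢ`;
subtracting the term `e₀ = 1` and dividing by `1 - q` yields the expansion of `ln_q (∏ xᵢ)`. -/

open Finset

namespace Finset

variable {ι R : Type*}

theorem prod_one_add_mul_eq_sum_powersetCard [CommSemiring R] (s : Finset ι) (c : R) (f : ι → R) :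
    ∏ i ∈ s, (1 + c * f i) = ∑ k ∈ range (#s + 1), c ^ k * ∑ t ∈ powersetCard k s, ∏ i ∈ t, f i := by
  rw [prod_one_add, sum_powerset]
  refine sum_congr rfl fun k _ => ?_
  rw [mul_sum]
  refine sum_congr rfl fun t ht => ?_
  rw [prod_mul_distrib, prod_const, (mem_powersetCard.1 ht).2]

theorem prod_one_add_mul_sub_one [CommRing R] (s : Finset ι) (c : R) (f : ι → R) :
    ∏ i ∈ s, (1 + c * f i) - 1 =
      c * ∑ k ∈ Icc 1 #s, c ^ (k - 1) * ∑ t ∈ powersetCard k s, ∏ i ∈ t, f i := by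
  rw [prod_one_add_mul_eq_sum_powersetCard, sum_range_succ', ← Ico_add_one_right_eq_Icc,
    sum_Ico_eq_sum_range]
  simp [pow_succ', mul_assoc, add_comm 1, mul_sum]

end Finset

theorem rpow_one_sub_eq_one_add_mul_lnq {q : ℝ} (hq : q ≠ 1) (x : ℝ) :
    x ^ (1 - q) = 1 + (1 - q) * lnq q x := by
  rw [lnq, mul_div_cancel₀ _ (sub_ne_zero.2 hq.symm)]
  ring

theorem lnq_prod {ι : Type*} {q : ℝ} (hq : q ≠ 1) (s : Finset ι) {x : ι → ℝ}
    (hx : ∀ i ∈ s, 0 ≤ x i) :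
    lnq q (∏ i ∈ s, x i) = ∑ k ∈ Icc 1 #s, (1 - q) ^ (k - 1) *
      ∑ t ∈ powersetCard k s, ∏ i ∈ t, lnq q (x i) := by
  rw [lnq, ← Real.finsetProd_rpow _ _ hx]
  simp only [rpow_one_sub_eq_one_add_mul_lnq hq]
  rw [prod_one_add_mul_sub_one, mul_div_cancel_left₀ _ (sub_ne_zero.2 hq.symm)]

theorem lnq_prod_expansion_general (q : ℝ) (hq : q ≠ 1) (d : ℕ)
    (x : Fin d → ℝ) (hx : ∀ i, 0 < x i) :
    lnq q (∏ i, x i)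
      = ∑ k ∈ Finset.Icc 1 d, (1 - q) ^ (k - 1) *
          ∑ S ∈ Finset.univ.powerset.filter (fun S : Finset (Fin d) => S.card = k),
            ∏ i ∈ S, lnq q (x i) := by
  simpa only [card_univ, Fintype.card_fin, powersetCard_eq_filter] using
    lnq_prod hq univ fun i _ => (hx i).le

/-- For every real `q ≠ 1`, every `d ≥ 1` and all positive reals
`x₁, ..., x_d`:
`ln_q (x₁ ⋯ x_d) = ∑_{k=1}^{d} (1-q)^(k-1) ∑_{S ⊆ {1,...,d}, |S| = k} ∏_{i ∈ S} ln_q xᵢ`.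
Applied to expanding eigenvalue moduli, the `q`-logarithm of the volume expansion rate
expands into terms of all orders in the sub-entropies `ln_q |λ_i|`, with coefficient
`(1-q)^(k-1)` in front of the order-`k` terms. -/
theorem lnq_prod_expansion (q : ℝ) (hq : q ≠ 1) (d : ℕ) (hd : 1 ≤ d)
    (x : Fin d → ℝ) (hx : ∀ i, 0 < x i) :
    lnq q (∏ i, x i)
      = ∑ k ∈ Finset.Icc 1 d, (1 - q) ^ (k - 1) *
          ∑ S ∈ Finset.univ.powerset.filter (fun S : Finset (Fin d) => S.card = k),
            ∏ i ∈ S, lnq q (x i) :=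
  lnq_prod_expansion_general q hq d x hx
end

section
/- For every integer N ≥ 3 and every integer s, the MIXMAX matrix T(N, s) has determinant equal to 1. -/
/-- The MIXMAX matrix `T(N, s)` (rows and columns indexed by `Fin N`, so index `i`
corresponds to row `i+1` of the paper): all entries of the first row and of the first
column equal `1`; for rows `i ≥ 2` (paper numbering), `T_{ij} = 1` when `j > i` and
`T_{ij} = i - j + 2` when `2 ≤ j ≤ i`; except that the entry `T_{32}` equals `3 + s`. -/
def mixmax (N : ℕ) (s : ℤ) : Matrix (Fin N) (Fin N) ℤ :=
  Matrix.of fun i j =>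
    if i.val = 2 ∧ j.val = 1 then 3 + s
    else if i.val = 0 ∨ j.val = 0 then 1
    else if i.val < j.val then 1
    else (i.val : ℤ) - (j.val : ℤ) + 2

/-- Lower unitriangular factor of the MIXMAX matrix. -/
def mixmaxL (N : ℕ) (s : ℤ) : Matrix (Fin N) (Fin N) ℤ :=
  Matrix.of fun i j =>
    if j.val = 0 then 1
    else if i.val < j.val then 0
    else if i.val = 2 ∧ j.val = 1 then 2 + s
    else (i.val : ℤ) - (j.val : ℤ) + 1

/-- Upper unitriangular factor of the MIXMAX matrix. -/
def mixmaxU (N : ℕ) : Matrix (Fin N) (Fin N) ℤ :=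
  Matrix.of fun i j =>
    if i.val = 0 then 1
    else if i = j then 1 else 0

lemma mixmax_eq_mul (N : ℕ) (hN : 3 ≤ N) (s : ℤ) :
    mixmax N s = mixmaxL N s * mixmaxU N := by
  have hz : 0 < N := by omega
  ext i j
  rw [Matrix.mul_apply]
  have hterm : ∀ k : Fin N, mixmaxL N s i k * mixmaxU N k j =
      (if k = ⟨0, hz⟩ then mixmaxL N s i ⟨0, hz⟩ else 0) +
      (if k = j then (if j ≠ ⟨0, hz⟩ then mixmaxL N s i j else 0) else 0) := by
    intro k
    by_cases hk : k = ⟨0, hz⟩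
    · by_cases hj : k = j
      · rw [← hj, hk]
        simp [mixmaxU]
      · have hjz : j ≠ ⟨0, hz⟩ := fun h => hj (hk.trans h.symm)
        have hzj : (⟨0, hz⟩ : Fin N) ≠ j := fun h => hjz h.symm
        rw [hk]
        simp [mixmaxU, hzj, hjz]
    · have hkv : k.val ≠ 0 := fun h => hk (Fin.ext h)
      by_cases hj : k = j
      · rw [← hj]
        simp [mixmaxU, hkv, hk]
      · simp [mixmaxU, hkv, hk, hj]
  rw [Finset.sum_congr rfl (fun k _ => hterm k), Finset.sum_add_distrib,
    Finset.sum_ite_eq' Finset.univ, Finset.sum_ite_eq' Finset.univ j]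
  simp only [Finset.mem_univ, if_true]
  have hLz : mixmaxL N s i ⟨0, hz⟩ = 1 := by simp [mixmaxL]
  rw [hLz]
  by_cases hj : j = (⟨0, hz⟩ : Fin N)
  · simp only [hj, ne_eq, not_true_eq_false, if_false, add_zero]
    simp [mixmax]
  · have hjv : j.val ≠ 0 := fun h => hj (Fin.ext h)
    simp only [ne_eq, hj, not_false_eq_true, if_true]
    simp only [mixmax, mixmaxL, Matrix.of_apply, hjv, if_neg hjv]
    by_cases h21 : i.val = 2 ∧ j.val = 1
    · have hlt : ¬ i.val < j.val := by omega
      rw [if_pos h21, if_neg hlt, if_pos h21]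
      norm_num
      ring
    · simp only [h21, if_false, or_false]
      by_cases hi0 : i.val = 0
      · have hlt : i.val < j.val := by omega
        rw [if_pos hi0, if_pos hlt]
        norm_num
      · simp only [hi0, false_or]
        by_cases hlt : i.val < j.val
        · rw [if_pos hlt, if_pos hlt]
          norm_num
        · rw [if_neg hlt, if_neg hlt]
          push_cast
          ring

lemma det_mixmaxL (N : ℕ) (s : ℤ) : (mixmaxL N s).det = 1 := by
  rw [Matrix.det_of_lowerTriangular]
  · apply Finset.prod_eq_one
    intro i _
    by_cases h0 : i.val = 0
    · simp [mixmaxL, h0]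
    · have h21 : ¬ (i.val = 2 ∧ i.val = 1) := by omega
      simp only [mixmaxL, Matrix.of_apply, h0, if_false, lt_irrefl, h21]
      ring
  · intro i j hij
    have h0 : j.val ≠ 0 := by
      have : i.val < j.val := hij
      omega
    have hlt : i.val < j.val := hij
    simp only [mixmaxL, Matrix.of_apply, if_neg h0, if_pos hlt]

lemma det_mixmaxU (N : ℕ) : (mixmaxU N).det = 1 := by
  rw [Matrix.det_of_upperTriangular]
  · apply Finset.prod_eq_one
    intro i _
    by_cases h0 : i.val = 0 <;> simp [mixmaxU, h0]
  · intro i j hij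
    have hlt : j.val < i.val := hij
    have h0 : i.val ≠ 0 := by omega
    have hne : ¬ i = j := fun h => by omega
    simp [mixmaxU, h0, hne]

/-- For every integer `N ≥ 3` and every integer `s`, the MIXMAX
matrix `T(N, s)` has determinant equal to `1`. -/
theorem mixmax_det_eq_one (N : ℕ) (hN : 3 ≤ N) (s : ℤ) :
    (mixmax N s).det = 1 := by
  rw [mixmax_eq_mul N hN s, Matrix.det_mul, det_mixmaxL, det_mixmaxU, mul_one]
end

section
/- Let λ₁ = (3+√5)/2 and λ₂ = (3−√5)/2, and for u ∈ ℝ let g(u) be the 3×3 symmetric matrix with g₁₁ = λ₁^{2+2u} + λ₂^{2+2u}, g₁₂ = g₂₁ = (1−λ₁)λ₁^{1+2u} + (1−λ₂)λ₂^{1+2u}, g₂₂ = (1−λ₁)²λ₁^{2u} + (1−λ₂)²λ₂^{2u}, g₁₃ = g₂₃ = g₃₁ = g₃₂ = 0, g₃₃ = 1. Let J be the 3×3 matrix with rows (2, −1, 0), (−1, 1, 0), (0, 0, 1). Then for every u ∈ ℝ, Jᵀ · g(u − 1) · J = g(u). That is, the Riemannian metric ds² = g_{μν}dw^μ dw^ν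 is invariant under the transformation w¹ = 2w'¹ − w'², w² = −w'¹ + w'², u = u' − 1, and is therefore consistent with the identification (w, 1) ≡ (Tw, 0) defining the suspension manifold W³ of the automorphism T = [[1,1],[1,2]]. -/
open Matrix

/-- `λ₁ = (3 + √5)/2`, the expanding eigenvalue of `T = [[1,1],[1,2]]`. -/
noncomputable def lam1 : ℝ := (3 + Real.sqrt 5) / 2

/-- `λ₂ = (3 - √5)/2`, the contracting eigenvalue of `T = [[1,1],[1,2]]`. -/
noncomputable def lam2 : ℝ := (3 - Real.sqrt 5) / 2

/-- The metric tensor `g(u)` of the suspension manifold `W³` of the automorphism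
`T = [[1,1],[1,2]]` (real powers). -/
noncomputable def gmet (u : ℝ) : Matrix (Fin 3) (Fin 3) ℝ :=
  !![lam1 ^ (2 + 2 * u) + lam2 ^ (2 + 2 * u),
     (1 - lam1) * lam1 ^ (1 + 2 * u) + (1 - lam2) * lam2 ^ (1 + 2 * u), 0;
     (1 - lam1) * lam1 ^ (1 + 2 * u) + (1 - lam2) * lam2 ^ (1 + 2 * u),
     (1 - lam1) ^ 2 * lam1 ^ (2 * u) + (1 - lam2) ^ 2 * lam2 ^ (2 * u), 0;
     0, 0, 1]

/-- The Jacobian matrix of the transformation `w¹ = 2w'¹ - w'²`, `w² = -w'¹ + w'²`,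
`u = u' - 1` implementing the identification `(w, 1) ≡ (Tw, 0)`. -/
def Jmat : Matrix (Fin 3) (Fin 3) ℝ :=
  !![2, -1, 0;
     -1, 1, 0;
     0, 0, 1]

/-- For every `u ∈ ℝ`, `Jᵀ · g(u - 1) · J = g(u)`: the metric
`ds² = g_{μν} dw^μ dw^ν` is invariant under the transformation
`w¹ = 2w'¹ - w'²`, `w² = -w'¹ + w'²`, `u = u' - 1`, hence consistent with the
identification `(w,1) ≡ (Tw,0)` defining the suspension manifold `W³`. -/
theorem metric_invariant_under_identification (u : ℝ) :
    (Jmat)ᵀ * gmet (u - 1) * Jmat = gmet u := by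
  have h5 : Real.sqrt 5 ^ 2 = 5 := Real.sq_sqrt (by norm_num)
  have hs0 : (0:ℝ) ≤ Real.sqrt 5 := Real.sqrt_nonneg 5
  have ha : (0:ℝ) < lam1 := by unfold lam1; positivity
  have hb : (0:ℝ) < lam2 := by unfold lam2; nlinarith [h5, hs0]
  have hsa : lam1 ^ 2 = 3 * lam1 - 1 := by unfold lam1; linear_combination h5 / 4
  have hsb : lam2 ^ 2 = 3 * lam2 - 1 := by unfold lam2; linear_combination h5 / 4
  have pa : ∀ (x : ℝ) (n : ℕ), lam1 ^ (x + (n:ℝ)) = lam1 ^ (x:ℝ) * lam1 ^ n := fun x n => by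
    rw [Real.rpow_add ha, Real.rpow_natCast]
  have pb : ∀ (x : ℝ) (n : ℕ), lam2 ^ (x + (n:ℝ)) = lam2 ^ (x:ℝ) * lam2 ^ n := fun x n => by
    rw [Real.rpow_add hb, Real.rpow_natCast]
  set A := lam1 ^ (2*u - 2) with hA
  set B := lam2 ^ (2*u - 2) with hB
  have a2 : lam1 ^ ((2:ℝ) + 2 * (u - 1)) = A * lam1 ^ 2 := by
    rw [show (2:ℝ) + 2*(u-1) = (2*u - 2) + ((2:ℕ):ℝ) by push_cast; ring, pa]
  have a1 : lam1 ^ ((1:ℝ) + 2 * (u - 1)) = A * lam1 := by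
    rw [show (1:ℝ) + 2*(u-1) = (2*u - 2) + ((1:ℕ):ℝ) by push_cast; ring, pa]; ring
  have a0 : lam1 ^ ((2:ℝ) * (u - 1)) = A := by
    rw [show (2:ℝ) * (u-1) = (2*u - 2) + ((0:ℕ):ℝ) by push_cast; ring, pa]; ring
  have a4 : lam1 ^ ((2:ℝ) + 2 * u) = A * lam1 ^ 4 := by
    rw [show (2:ℝ) + 2*u = (2*u - 2) + ((4:ℕ):ℝ) by push_cast; ring, pa]
  have a3 : lam1 ^ ((1:ℝ) + 2 * u) = A * lam1 ^ 3 := by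
    rw [show (1:ℝ) + 2*u = (2*u - 2) + ((3:ℕ):ℝ) by push_cast; ring, pa]
  have a2' : lam1 ^ ((2:ℝ) * u) = A * lam1 ^ 2 := by
    rw [show (2:ℝ) * u = (2*u - 2) + ((2:ℕ):ℝ) by push_cast; ring, pa]
  have b2 : lam2 ^ ((2:ℝ) + 2 * (u - 1)) = B * lam2 ^ 2 := by
    rw [show (2:ℝ) + 2*(u-1) = (2*u - 2) + ((2:ℕ):ℝ) by push_cast; ring, pb]
  have b1 : lam2 ^ ((1:ℝ) + 2 * (u - 1)) = B * lam2 := by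
    rw [show (1:ℝ) + 2*(u-1) = (2*u - 2) + ((1:ℕ):ℝ) by push_cast; ring, pb]; ring
  have b0 : lam2 ^ ((2:ℝ) * (u - 1)) = B := by
    rw [show (2:ℝ) * (u-1) = (2*u - 2) + ((0:ℕ):ℝ) by push_cast; ring, pb]; ring
  have b4 : lam2 ^ ((2:ℝ) + 2 * u) = B * lam2 ^ 4 := by
    rw [show (2:ℝ) + 2*u = (2*u - 2) + ((4:ℕ):ℝ) by push_cast; ring, pb]
  have b3 : lam2 ^ ((1:ℝ) + 2 * u) = B * lam2 ^ 3 := by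
    rw [show (1:ℝ) + 2*u = (2*u - 2) + ((3:ℕ):ℝ) by push_cast; ring, pb]
  have b2' : lam2 ^ ((2:ℝ) * u) = B * lam2 ^ 2 := by
    rw [show (2:ℝ) * u = (2*u - 2) + ((2:ℕ):ℝ) by push_cast; ring, pb]
  have hJt : Jmatᵀ = !![2, -1, 0; -1, 1, 0; 0, 0, 1] := by
    ext i j; fin_cases i <;> fin_cases j <;> simp [Jmat]
  rw [hJt]
  ext i j
  fin_cases i <;> fin_cases j <;>
    simp [gmet, Jmat, Matrix.mul_apply, Matrix.transpose_apply, Fin.sum_univ_three,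
      a2, a1, a0, a4, a3, a2', b2, b1, b0, b4, b3, b2'] <;>
    first
    | linear_combination (-(A * (lam1^2 + 3*lam1 - 1))) * hsa + (-(B * (lam2^2 + 3*lam2 - 1))) * hsb
    | linear_combination (A * (lam1^2 + 2*lam1 - 1)) * hsa + (B * (lam2^2 + 2*lam2 - 1)) * hsb
    | linear_combination (-(A * (lam1^2 + lam1 - 1))) * hsa + (-(B * (lam2^2 + lam2 - 1))) * hsb
    | linear_combination (A * (lam1^2 + 3*lam1 - 1)) * hsa + (B * (lam2^2 + 3*lam2 - 1)) * hsb
    | linear_combination (-(A * (lam1^2 + 2*lam1 - 1))) * hsa + (-(B * (lam2^2 + 2*lam2 - 1))) * hsb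
    | linear_combination (A * (lam1^2 + lam1 - 1)) * hsa + (B * (lam2^2 + lam2 - 1)) * hsb
end

section
/- Let λ₁ = (3+√5)/2, k = ln λ₁, and c = (λ₁−1)k/(λ₁+1). Suppose w¹, w², u : ℝ → ℝ are twice differentiable and satisfy the geodesic equations: (i) ẅ¹ + 2c·ẇ¹·u̇ − 4c·ẇ²·u̇ = 0; (ii) ẅ² − 2c·ẇ²·u̇ − 4c·ẇ¹·u̇ = 0; (iii) ü + [(1−λ₁^{4u+4})k/λ₁^{2u+2}]·(ẇ¹)² + [2(1+λ₁^{4u+3})(λ₁−1)k/λ₁^{2u+2}]·ẇ¹ẇ² + [(1−λ₁^{4u+2})(λ₁−1)²k/λ₁^{2u+2}]·(ẇ²)² = 0. Then the transformed functions w'¹ = w¹ + w², w'² = w¹ + 2w², u' = u + 1 (i.e., the inverse of the substitution w¹ = 2w'¹ − w'², w² = −w'¹ + w'², u = u' − 1) satisfy the same three equations. That is, the geodesic flow equations on the suspension manifold are invariant under the transformation implementing the identification (w,1) ≡ (Tw,0). -/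
/-- `k = ln λ₁`. -/
noncomputable def kconst : ℝ := Real.log lam1

/-- `c = (λ₁ - 1) k / (λ₁ + 1)`, the coefficient in the geodesic equations. -/
noncomputable def cconst : ℝ := (lam1 - 1) * kconst / (lam1 + 1)

open Real

theorem lam1_pos : 0 < lam1 := by
  unfold lam1
  positivity

theorem lam1_sq : lam1 ^ 2 = 3 * lam1 - 1 := by
  have h5 := sq_sqrt (show (0 : ℝ) ≤ 5 by norm_num)
  unfold lam1
  linear_combination h5 / 4

theorem deriv_add_const_mul {f g : ℝ → ℝ} (a : ℝ) (hf : Differentiable ℝ f)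
    (hg : Differentiable ℝ g) :
    deriv (fun s => f s + a * g s) = fun s => deriv f s + a * deriv g s := by
  funext s
  rw [deriv_fun_add (hf s) ((hg s).const_mul a), deriv_const_mul_field']

section

variable {L : ℝ}

/-- `L dw¹ + (1 - L) dw²` evaluated on `(a, b)`; the metric is
`λ₁^{2u} (coframe λ₁)² + λ₂^{2u} (coframe λ₂)²` with `λ₂ = λ₁⁻¹`. -/
def coframe (L a b : ℝ) : ℝ := L * a + (1 - L) * b

theorem mul_coframe_add_add_two_mul (hL : L ^ 2 = 3 * L - 1) (a b : ℝ) :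
    L * coframe L (a + b) (a + 2 * b) = coframe L a b := by
  unfold coframe
  linear_combination (-b) * hL

theorem inv_sq_eq_three_mul_inv_sub_one (hL0 : L ≠ 0) (hL : L ^ 2 = 3 * L - 1) :
    L⁻¹ ^ 2 = 3 * L⁻¹ - 1 := by
  field_simp
  linear_combination hL

/-- `Γᵘ_{νρ} vᵛ vᵖ` at height `u` for `v = (a, b)`, with `λ₁` replaced by `L` and `ln λ₁`
by `k`. -/
noncomputable def christoffelU (L k u a b : ℝ) : ℝ :=
  (1 - L ^ (4 * u + 4)) * k / L ^ (2 * u + 2) * (a * a)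
    + 2 * (1 + L ^ (4 * u + 3)) * (L - 1) * k / L ^ (2 * u + 2) * (a * b)
    + (1 - L ^ (4 * u + 2)) * (L - 1) ^ 2 * k / L ^ (2 * u + 2) * (b * b)

theorem christoffelU_eq_coframe (hL : 0 < L) (k u a b : ℝ) :
    christoffelU L k u a b
      = k * (L⁻¹ ^ (2 * u) * coframe L⁻¹ a b ^ 2 - L ^ (2 * u) * coframe L a b ^ 2) := by
  have split (x y : ℝ) : L ^ (x + y) = L ^ x * L ^ y := rpow_add hL x y
  have e4 : L ^ (4 * u + 4) = L ^ (2 * u) * L ^ (2 * u) * L ^ 4 := by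
    rw [show 4 * u + 4 = 2 * u + 2 * u + 4 by ring, split, split, rpow_ofNat]
  have e3 : L ^ (4 * u + 3) = L ^ (2 * u) * L ^ (2 * u) * L ^ 3 := by
    rw [show 4 * u + 3 = 2 * u + 2 * u + 3 by ring, split, split, rpow_ofNat]
  have e2 : L ^ (4 * u + 2) = L ^ (2 * u) * L ^ (2 * u) * L ^ 2 := by
    rw [show 4 * u + 2 = 2 * u + 2 * u + 2 by ring, split, split, rpow_ofNat]
  have d : L ^ (2 * u + 2) = L ^ (2 * u) * L ^ 2 := by rw [split, rpow_ofNat]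
  have hP : L ^ (2 * u) ≠ 0 := (rpow_pos_of_pos hL _).ne'
  unfold christoffelU coframe
  rw [e4, e3, e2, d, inv_rpow hL.le]
  field_simp
  ring

theorem christoffelU_add_one (hL : 0 < L) (hL2 : L ^ 2 = 3 * L - 1) (k u a b : ℝ) :
    christoffelU L k (u + 1) (a + b) (a + 2 * b) = christoffelU L k u a b := by
  rw [christoffelU_eq_coframe hL, christoffelU_eq_coframe hL,
    ← mul_coframe_add_add_two_mul hL2 a b,
    ← mul_coframe_add_add_two_mul (inv_sq_eq_three_mul_inv_sub_one hL.ne' hL2) a b,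
    mul_add_one, rpow_add hL, rpow_add (inv_pos.2 hL), rpow_two, rpow_two]
  field_simp

end

theorem geodesic_equations_invariant_general
    (w1 w2 u : ℝ → ℝ)
    (hw1 : Differentiable ℝ w1) (hw1' : Differentiable ℝ (deriv w1))
    (hw2 : Differentiable ℝ w2) (hw2' : Differentiable ℝ (deriv w2))
    (eq1 : ∀ t, deriv (deriv w1) t
        + 2 * cconst * deriv w1 t * deriv u t
        - 4 * cconst * deriv w2 t * deriv u t = 0)
    (eq2 : ∀ t, deriv (deriv w2) t
        - 2 * cconst * deriv w2 t * deriv u t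
        - 4 * cconst * deriv w1 t * deriv u t = 0)
    (eq3 : ∀ t, deriv (deriv u) t
        + (1 - lam1 ^ (4 * u t + 4)) * kconst / lam1 ^ (2 * u t + 2)
            * (deriv w1 t * deriv w1 t)
        + 2 * (1 + lam1 ^ (4 * u t + 3)) * (lam1 - 1) * kconst / lam1 ^ (2 * u t + 2)
            * (deriv w1 t * deriv w2 t)
        + (1 - lam1 ^ (4 * u t + 2)) * (lam1 - 1) ^ 2 * kconst / lam1 ^ (2 * u t + 2)
            * (deriv w2 t * deriv w2 t) = 0) :
    (∀ t, deriv (deriv (fun s => w1 s + w2 s)) t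
        + 2 * cconst * deriv (fun s => w1 s + w2 s) t * deriv (fun s => u s + 1) t
        - 4 * cconst * deriv (fun s => w1 s + 2 * w2 s) t * deriv (fun s => u s + 1) t
          = 0) ∧
    (∀ t, deriv (deriv (fun s => w1 s + 2 * w2 s)) t
        - 2 * cconst * deriv (fun s => w1 s + 2 * w2 s) t * deriv (fun s => u s + 1) t
        - 4 * cconst * deriv (fun s => w1 s + w2 s) t * deriv (fun s => u s + 1) t
          = 0) ∧
    (∀ t, deriv (deriv (fun s => u s + 1)) t
        + (1 - lam1 ^ (4 * (u t + 1) + 4)) * kconst / lam1 ^ (2 * (u t + 1) + 2)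
            * (deriv (fun s => w1 s + w2 s) t * deriv (fun s => w1 s + w2 s) t)
        + 2 * (1 + lam1 ^ (4 * (u t + 1) + 3)) * (lam1 - 1) * kconst
            / lam1 ^ (2 * (u t + 1) + 2)
            * (deriv (fun s => w1 s + w2 s) t * deriv (fun s => w1 s + 2 * w2 s) t)
        + (1 - lam1 ^ (4 * (u t + 1) + 2)) * (lam1 - 1) ^ 2 * kconst
            / lam1 ^ (2 * (u t + 1) + 2)
            * (deriv (fun s => w1 s + 2 * w2 s) t * deriv (fun s => w1 s + 2 * w2 s) t)
          = 0) := by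
  have d1 : deriv (fun s => w1 s + w2 s) = fun s => deriv w1 s + deriv w2 s := by
    simpa using deriv_add_const_mul 1 hw1 hw2
  have d2 := deriv_add_const_mul 2 hw1 hw2
  have dd1 : deriv (deriv (fun s => w1 s + w2 s))
      = fun s => deriv (deriv w1) s + deriv (deriv w2) s := by
    simpa [d1] using deriv_add_const_mul 1 hw1' hw2'
  have dd2 : deriv (deriv (fun s => w1 s + 2 * w2 s))
      = fun s => deriv (deriv w1) s + 2 * deriv (deriv w2) s := by
    rw [d2]
    exact deriv_add_const_mul 2 hw1' hw2'
  have du : deriv (fun s => u s + 1) = deriv u := deriv_add_const' 1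
  refine ⟨fun t => ?_, fun t => ?_, fun t => ?_⟩
  · rw [dd1]
    simp only [d1, d2, du]
    linear_combination eq1 t + eq2 t
  · rw [dd2]
    simp only [d1, d2, du]
    linear_combination eq1 t + 2 * eq2 t
  · have key := christoffelU_add_one lam1_pos lam1_sq kconst (u t) (deriv w1 t) (deriv w2 t)
    unfold christoffelU at key
    simp only [du, d1, d2]
    linear_combination eq3 t + key

/-- If twice differentiable functions `w¹, w², u : ℝ → ℝ` satisfy
the geodesic equations of the suspension metric, then the transformed functions
`w'¹ = w¹ + w²`, `w'² = w¹ + 2w²`, `u' = u + 1` (the inverse of the substitution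
`w¹ = 2w'¹ - w'²`, `w² = -w'¹ + w'²`, `u = u' - 1`) satisfy the same three equations:
the geodesic flow equations are invariant under the transformation implementing the
identification `(w,1) ≡ (Tw,0)`. -/
theorem geodesic_equations_invariant
    (w1 w2 u : ℝ → ℝ)
    (hw1 : Differentiable ℝ w1) (hw1' : Differentiable ℝ (deriv w1))
    (hw2 : Differentiable ℝ w2) (hw2' : Differentiable ℝ (deriv w2))
    (hu : Differentiable ℝ u) (hu' : Differentiable ℝ (deriv u))
    (eq1 : ∀ t, deriv (deriv w1) t
        + 2 * cconst * deriv w1 t * deriv u t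
        - 4 * cconst * deriv w2 t * deriv u t = 0)
    (eq2 : ∀ t, deriv (deriv w2) t
        - 2 * cconst * deriv w2 t * deriv u t
        - 4 * cconst * deriv w1 t * deriv u t = 0)
    (eq3 : ∀ t, deriv (deriv u) t
        + (1 - lam1 ^ (4 * u t + 4)) * kconst / lam1 ^ (2 * u t + 2)
            * (deriv w1 t * deriv w1 t)
        + 2 * (1 + lam1 ^ (4 * u t + 3)) * (lam1 - 1) * kconst / lam1 ^ (2 * u t + 2)
            * (deriv w1 t * deriv w2 t)
        + (1 - lam1 ^ (4 * u t + 2)) * (lam1 - 1) ^ 2 * kconst / lam1 ^ (2 * u t + 2)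
            * (deriv w2 t * deriv w2 t) = 0) :
    (∀ t, deriv (deriv (fun s => w1 s + w2 s)) t
        + 2 * cconst * deriv (fun s => w1 s + w2 s) t * deriv (fun s => u s + 1) t
        - 4 * cconst * deriv (fun s => w1 s + 2 * w2 s) t * deriv (fun s => u s + 1) t
          = 0) ∧
    (∀ t, deriv (deriv (fun s => w1 s + 2 * w2 s)) t
        - 2 * cconst * deriv (fun s => w1 s + 2 * w2 s) t * deriv (fun s => u s + 1) t
        - 4 * cconst * deriv (fun s => w1 s + w2 s) t * deriv (fun s => u s + 1) t
          = 0) ∧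
    (∀ t, deriv (deriv (fun s => u s + 1)) t
        + (1 - lam1 ^ (4 * (u t + 1) + 4)) * kconst / lam1 ^ (2 * (u t + 1) + 2)
            * (deriv (fun s => w1 s + w2 s) t * deriv (fun s => w1 s + w2 s) t)
        + 2 * (1 + lam1 ^ (4 * (u t + 1) + 3)) * (lam1 - 1) * kconst
            / lam1 ^ (2 * (u t + 1) + 2)
            * (deriv (fun s => w1 s + w2 s) t * deriv (fun s => w1 s + 2 * w2 s) t)
        + (1 - lam1 ^ (4 * (u t + 1) + 2)) * (lam1 - 1) ^ 2 * kconst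
            / lam1 ^ (2 * (u t + 1) + 2)
            * (deriv (fun s => w1 s + 2 * w2 s) t * deriv (fun s => w1 s + 2 * w2 s) t)
          = 0) :=
  geodesic_equations_invariant_general w1 w2 u hw1 hw1' hw2 hw2' eq1 eq2 eq3
end
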